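/- The logarithm of the product K_p = ∏_{p prime, p ≥ 3} sec(π/p) satisfies log K_p = ∑_{k=1}^∞ ((2^{2k}-1)·ζ(2k)/k) · (P(2k) - 2^{-2k}), where P(s) = ∑_{p prime} p^{-s} is the prime zeta function. -/

import Mathlib

/-!
Taking logarithms in Euler's product `sin (π x) / (π x) = ∏ (1 - x² / n²)` and expanding each
`-log (1 - x² / n²)` as a power series gives `-log (sin (π x) / (π x)) = ∑ ζ(2k) x^(2k) / k`
for `0 < x < 1`. Since `cos θ = sin (2θ) / (2 sin θ)`, subtracting the series at `x` from the one at
`2x` gives `-log (cos (π x)) = ∑ (2^(2k) - 1) ζ(2k) x^(2k) / k`. Put `x = 1/p` and sum over the odd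
primes: all terms are nonnegative, so the two summations may be interchanged.
-/

open Real Filter Topology

theorem HasSum.tsum_comm_of_nonneg {β γ : Type*} {f : β → γ → ℝ} {g : β → ℝ} {a : ℝ}
    (hf : ∀ b c, 0 ≤ f b c) (hrow : ∀ b, HasSum (f b) (g b)) (hg : HasSum g a) :
    HasSum (fun c => ∑' b, f b c) a := by
  have hsum : Summable (Function.uncurry f) :=
    (summable_prod_of_nonneg fun p => hf p.1 p.2).mpr
      ⟨fun b => (hrow b).summable, by simpa only [(hrow _).tsum_eq] using hg.summable⟩
  have hcol : ∀ c, Summable fun b => f b c :=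
    ((summable_prod_of_nonneg fun p => hf p.2 p.1).mp hsum.prod_symm).1
  have huncurry : HasSum (Function.uncurry f) a := by
    simpa only [(hsum.hasSum.prod_fiberwise hrow).unique hg] using hsum.hasSum
  exact ((Equiv.prodComm γ β).hasSum_iff.2 huncurry).prod_fiberwise fun c => (hcol c).hasSum

theorem hasSum_neg_log_of_tendsto_prod {u : ℕ → ℝ} {L : ℝ} (hu0 : ∀ i, 0 < u i)
    (hu1 : ∀ i, u i ≤ 1) (hL : 0 < L)
    (h : Tendsto (fun n => ∏ i ∈ Finset.range n, u i) atTop (𝓝 L)) :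
    HasSum (fun i => -log (u i)) (-log L) := by
  rw [hasSum_iff_tendsto_nat_of_nonneg fun i => neg_nonneg.mpr (log_nonpos (hu0 i).le (hu1 i))]
  convert ((continuousAt_log hL.ne').tendsto.comp h).neg using 2 with n
  simp [log_prod fun i _ => (hu0 i).ne']

theorem hasSum_neg_log_one_sub_sq_div {x : ℝ} (h0 : 0 < x) (h1 : x < 1) :
    HasSum (fun n : ℕ => -log (1 - x ^ 2 / ((n : ℝ) + 1) ^ 2))
      (-log (sin (π * x) / (π * x))) := by
  have hπx : 0 < π * x := by positivity
  have hlt : ∀ n : ℕ, x ^ 2 / ((n : ℝ) + 1) ^ 2 < 1 := fun n => by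
    rw [div_lt_one (by positivity)]
    nlinarith [n.cast_nonneg (α := ℝ)]
  refine hasSum_neg_log_of_tendsto_prod (fun n => sub_pos.2 (hlt n))
    (fun n => sub_le_self _ (by positivity))
    (div_pos (sin_pos_of_pos_of_lt_pi hπx (by nlinarith [pi_pos])) hπx) ?_
  simpa [mul_div_cancel_left₀ _ hπx.ne'] using (tendsto_euler_sin_prod x).div_const (π * x)

theorem hasSum_neg_log_sin_div {x : ℝ} (h0 : 0 < x) (h1 : x < 1) :
    HasSum (fun k : ℕ =>
        (∑' m : ℕ, 1 / ((m : ℝ) + 1) ^ (2 * (k + 1))) * x ^ (2 * (k + 1)) / ((k : ℝ) + 1))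
      (-log (sin (π * x) / (π * x))) := by
  have hrow : ∀ n : ℕ, HasSum (fun k : ℕ => (x ^ 2 / ((n : ℝ) + 1) ^ 2) ^ (k + 1) / (k + 1))
      (-log (1 - x ^ 2 / ((n : ℝ) + 1) ^ 2)) := fun n => by
    have hq : |x ^ 2 / ((n : ℝ) + 1) ^ 2| < 1 := by
      rw [abs_of_nonneg (by positivity), div_lt_one (by positivity)]
      nlinarith [n.cast_nonneg (α := ℝ)]
    exact_mod_cast hasSum_pow_div_log_of_abs_lt_one hq
  convert HasSum.tsum_comm_of_nonneg (fun n k => by positivity) hrow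
    (hasSum_neg_log_one_sub_sq_div h0 h1) using 2 with k
  have hterm : ∀ n : ℕ, (x ^ 2 / ((n : ℝ) + 1) ^ 2) ^ (k + 1) / (k + 1) =
      x ^ (2 * (k + 1)) / (k + 1) * (1 / ((n : ℝ) + 1) ^ (2 * (k + 1))) := fun n => by
    rw [div_pow, ← pow_mul, ← pow_mul]
    ring
  rw [tsum_congr hterm, tsum_mul_left]
  ring

/-- `(2^(2k) - 1) ζ(2k) / k` at `k + 1`: the coefficient of `x^(2k+2)` in `log (sec (π x))`. -/
noncomputable def logSecCoeff (k : ℕ) : ℝ :=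
  ((2 : ℝ) ^ (2 * (k + 1)) - 1) * (∑' m : ℕ, 1 / ((m : ℝ) + 1) ^ (2 * (k + 1))) / ((k : ℝ) + 1)

theorem logSecCoeff_nonneg (k : ℕ) : 0 ≤ logSecCoeff k :=
  div_nonneg (mul_nonneg (sub_nonneg.2 (one_le_pow₀ one_le_two))
    (tsum_nonneg fun m => by positivity)) (by positivity)

theorem hasSum_neg_log_cos {x : ℝ} (h0 : 0 < x) (h1 : x < 1 / 2) :
    HasSum (fun k => logSecCoeff k * x ^ (2 * (k + 1))) (-log (cos (π * x))) := by
  have hπx : 0 < π * x := by positivity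
  have hsin : 0 < sin (π * x) := sin_pos_of_pos_of_lt_pi hπx (by nlinarith [pi_pos])
  have hcos : cos (π * x) = (sin (π * (2 * x)) / (π * (2 * x))) / (sin (π * x) / (π * x)) := by
    rw [show π * (2 * x) = 2 * (π * x) by ring, sin_two_mul]
    field_simp
  have hsinc2 : sin (π * (2 * x)) / (π * (2 * x)) ≠ 0 := by
    rw [show π * (2 * x) = 2 * (π * x) by ring, sin_two_mul]
    have : 0 < cos (π * x) := cos_pos_of_mem_Ioo ⟨by linarith [pi_pos], by nlinarith [pi_pos]⟩
    positivity
  rw [hcos, log_div hsinc2 (div_pos hsin hπx).ne', neg_sub']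
  refine ((hasSum_neg_log_sin_div (x := 2 * x) (by linarith) (by linarith)).sub
    (hasSum_neg_log_sin_div h0 (by linarith))).congr_fun fun k => ?_
  rw [logSecCoeff, mul_pow]
  ring

theorem tsum_primes_sub_eq_tsum_odd_primes {f : ℕ → ℝ}
    (hf : Summable fun p : Nat.Primes => f p) :
    ∑' p : Nat.Primes, f p - f 2 = ∑' n : ℕ, if n.Prime ∧ 3 ≤ n then f n else 0 := by
  have hsub : ∑' p : Nat.Primes, f p = ∑' n, {p : ℕ | p.Prime}.indicator f n := tsum_subtype _ f
  have hind : Summable ({p : ℕ | p.Prime}.indicator f) := summable_subtype_iff_indicator.mp hf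
  rw [hsub, hind.tsum_eq_add_tsum_ite 2]
  simp only [Set.indicator_apply, Set.mem_ofPred_eq, Nat.prime_two, if_true, add_sub_cancel_left]
  refine tsum_congr fun n => ?_
  by_cases h2 : n = 2
  · simp [h2]
  · by_cases hp : n.Prime
    · simp [h2, hp, show 3 ≤ n by have := hp.two_le; omega]
    · simp [h2, hp]

theorem cos_pi_div_pos {x : ℝ} (hx : 2 < x) : 0 < cos (π / x) := by
  apply cos_pos_of_mem_Ioo
  constructor
  · linarith [show 0 < π / x by positivity, pi_pos]
  · exact div_lt_div_of_pos_left pi_pos two_pos hx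

theorem hasSum_neg_log_cos_odd_primes {K : ℝ} (hK : 0 < K)
    (h : Tendsto (fun n : ℕ =>
      ∏ p ∈ (Finset.range n).filter (fun p => p.Prime ∧ 3 ≤ p), (cos (π / p))⁻¹) atTop (𝓝 K)) :
    HasSum (fun p : ℕ => if p.Prime ∧ 3 ≤ p then -log (cos (π / p)) else 0) (log K) := by
  set u : ℕ → ℝ := fun p => if p.Prime ∧ 3 ≤ p then cos (π / p) else 1
  have hu : ∀ p, 0 < u p ∧ u p ≤ 1 := fun p => by
    by_cases hp : p.Prime ∧ 3 ≤ p
    · simpa [u, hp] using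
        ⟨cos_pi_div_pos (by exact_mod_cast hp.2 : (2 : ℝ) < p), cos_le_one _⟩
    · simp [u, hp]
  have hprod : Tendsto (fun n => ∏ p ∈ Finset.range n, u p) atTop (𝓝 K⁻¹) := by
    simpa [Finset.prod_filter, Finset.prod_inv_distrib, u] using h.inv₀ hK.ne'
  convert hasSum_neg_log_of_tendsto_prod (fun p => (hu p).1) (fun p => (hu p).2)
    (inv_pos.2 hK) hprod using 1
  · funext p
    split_ifs with hp <;> simp [u, hp]
  · rw [log_inv, neg_neg]

theorem log_Kp_eq (Kp : ℝ) (hKp : 0 < Kp)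
    (h : Tendsto
      (fun n : ℕ =>
        ∏ p ∈ (Finset.range n).filter (fun p => p.Prime ∧ 3 ≤ p), (Real.cos (π / p))⁻¹)
      atTop (nhds Kp)) :
    Real.log Kp =
      ∑' k : ℕ,
        ((2 ^ (2 * (k + 1)) - 1) * (∑' m : ℕ, 1 / ((m : ℝ) + 1) ^ (2 * (k + 1))) / ((k : ℝ) + 1)) *
          ((∑' p : Nat.Primes, 1 / ((p : ℕ) : ℝ) ^ (2 * (k + 1))) - 1 / 2 ^ (2 * (k + 1))) := by
  have hrow : ∀ p : ℕ, HasSum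
      (fun k => if p.Prime ∧ 3 ≤ p then logSecCoeff k * (1 / (p : ℝ)) ^ (2 * (k + 1)) else 0)
      (if p.Prime ∧ 3 ≤ p then -log (cos (π / p)) else 0) := fun p => by
    split_ifs with hp
    · have h3 : (3 : ℝ) ≤ p := by exact_mod_cast hp.2
      simpa only [mul_one_div] using
        hasSum_neg_log_cos (x := 1 / p) (by positivity) (by gcongr; linarith)
    · exact hasSum_zero
  have hterm : ∀ (p : ℕ) k,
      0 ≤ if p.Prime ∧ 3 ≤ p then logSecCoeff k * (1 / (p : ℝ)) ^ (2 * (k + 1)) else 0 :=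
    fun p k => by
      split_ifs
      exacts [mul_nonneg (logSecCoeff_nonneg k) (by positivity), le_rfl]
  rw [← (HasSum.tsum_comm_of_nonneg hterm hrow (hasSum_neg_log_cos_odd_primes hKp h)).tsum_eq]
  refine tsum_congr fun k => ?_
  have hodd := tsum_primes_sub_eq_tsum_odd_primes (f := fun n : ℕ => 1 / (n : ℝ) ^ (2 * (k + 1)))
    ((summable_one_div_nat_pow.mpr (by omega)).subtype _)
  simp only [Nat.cast_ofNat] at hodd
  rw [hodd, ← tsum_mul_left]
  simp only [logSecCoeff, mul_ite, mul_zero, one_div_pow]
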